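/- arXiv:1605.08435 — 2 statements merged into one kernel-verified Lean document; each statement's English description precedes it below -/
import Mathlib

section
/- Let C be a triangulated category with a weight structure w, and let A → C' → B → A[1] be a distinguished triangle. Then for any fixed (i−1)-weight decompositions w_{≤i−1}A → A → w_{≥i}A and w_{≤i−1}B → B → w_{≥i}B there exists an (i−1)-weight decomposition of C' such that w_{≤i−1}C' is an extension of w_{≤i−1}B by w_{≤i−1}A, i.e., there is a distinguished triangle w_{≤i−1}A → w_{≤i−1}C' → w_{≤i−1}B. -/
/-
Fix `L ∈ C_{w≤i-1}`. As `Hom(L, C_{w≥i}) = 0`, the weight decompositions of `A` and `B` make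
`Hom(L, LA) → Hom(L, A)` and `Hom(L, LB) → Hom(L, B)` surjective and `Hom(L, LA[1]) → Hom(L, A[1])`,
`Hom(L, LB[1]) → Hom(L, B[1])` injective. The composite `LB → B → A[1] → GA[1]` vanishes by
orthogonality, so `LB → B → A[1]` lifts to `t : LB → LA[1]`. Completing `t` to a triangle
`LA → LC → LB` and `(fA, fB)` to a morphism of triangles gives `s : LC → C'`, whose cone is `GC`.
`LC` is an extension of objects of weight `≤ i - 1`, and the four lemma for `Hom(L, -)` makes
`Hom(L, s)` surjective and `Hom(L, s[1])` injective, so `Hom(L, GC) = 0`, i.e. `GC ∈ C_{w≥i}`.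
-/

open CategoryTheory CategoryTheory.Limits CategoryTheory.Pretriangulated

universe v u v₂ u₂

/-- `X` is a retract of `Y`: the identity of `X` factors through `Y`. -/
def IsRetract {C : Type u} [Category.{v} C] (X Y : C) : Prop :=
  ∃ (i : X ⟶ Y) (r : Y ⟶ X), i ≫ r = 𝟙 X

variable (C : Type u) [Category.{v} C] [HasZeroObject C] [Preadditive C] [HasShift C ℤ]
  [∀ n : ℤ, (shiftFunctor C n).Additive] [Pretriangulated C]

/-- A weight structure on a triangulated category `C`, given by the classes
`LE = C_{w≤0}` and `GE = C_{w≥0}`. -/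
structure WeightStructure where
  LE : Set C
  GE : Set C
  retract_mem_LE : ∀ ⦃X Y : C⦄, IsRetract X Y → Y ∈ LE → X ∈ LE
  retract_mem_GE : ∀ ⦃X Y : C⦄, IsRetract X Y → Y ∈ GE → X ∈ GE
  shift_LE : ∀ X ∈ LE, X⟦(-1 : ℤ)⟧ ∈ LE
  shift_GE : ∀ X ∈ GE, X⟦(1 : ℤ)⟧ ∈ GE
  orthogonal : ∀ ⦃X Y : C⦄, X ∈ LE → Y ∈ GE → ∀ f : X ⟶ Y⟦(1 : ℤ)⟧, f = 0
  exists_decomp : ∀ M : C, ∃ (B A : C) (f : B ⟶ M) (g : M ⟶ A) (h : A ⟶ B⟦(1 : ℤ)⟧),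
    (Triangle.mk f g h ∈ distTriang C) ∧ B ∈ LE ∧ A⟦(-1 : ℤ)⟧ ∈ GE

namespace WeightStructure

variable {C}

/-- `C_{w≤n} = C_{w≤0}[n]`. -/
def le (w : WeightStructure C) (n : ℤ) : Set C := {X : C | X⟦(-n)⟧ ∈ w.LE}

/-- `C_{w≥n} = C_{w≥0}[n]`. -/
def ge (w : WeightStructure C) (n : ℤ) : Set C := {X : C | X⟦(-n)⟧ ∈ w.GE}

/-- `C_{w=n} = C_{w≤n} ∩ C_{w≥n}`. -/
def heart (w : WeightStructure C) (n : ℤ) : Set C := w.le n ∩ w.ge n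

end WeightStructure

variable {C}

/-- The envelope of a class `D`: the smallest class containing `D` and all zero objects that is
closed under extensions and retracts. -/
inductive Envelope (D : Set C) : C → Prop
  | of (X : C) (hX : X ∈ D) : Envelope D X
  | zero (Z : C) (hZ : IsZero Z) : Envelope D Z
  | ext (T : Triangle C) (hT : T ∈ distTriang C)
      (h₁ : Envelope D T.obj₁) (h₃ : Envelope D T.obj₃) : Envelope D T.obj₂
  | retract (X Y : C) (h : IsRetract X Y) (hY : Envelope D Y) : Envelope D X

lemma IsRetract.map {C : Type u} [Category.{v} C] {D : Type u₂} [Category.{v₂} D] (F : C ⥤ D)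
    {X Y : C} (h : IsRetract X Y) : IsRetract (F.obj X) (F.obj Y) := by
  obtain ⟨i, r, hir⟩ := h
  exact ⟨F.map i, F.map r, by rw [← F.map_comp, hir, F.map_id]⟩

namespace CategoryTheory.Pretriangulated

variable {T T' : Triangle C}

lemma coyoneda_exact₂_shift (hT : T ∈ distTriang C) {X : C}
    (f : X ⟶ T.obj₂⟦(1 : ℤ)⟧) (hf : f ≫ T.mor₂⟦(1 : ℤ)⟧' = 0) :
    ∃ g : X ⟶ T.obj₁⟦(1 : ℤ)⟧, f = g ≫ T.mor₁⟦(1 : ℤ)⟧' := by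
  obtain ⟨g, hg⟩ : ∃ g : X ⟶ T.obj₁⟦(1 : ℤ)⟧, f = g ≫ (-T.mor₁⟦(1 : ℤ)⟧') :=
    Triangle.coyoneda_exact₃ _ (rot_of_distTriang _ (rot_of_distTriang _ hT)) f
      (by change f ≫ (-T.mor₂⟦(1 : ℤ)⟧') = 0; rw [Preadditive.comp_neg, hf, neg_zero])
  exact ⟨-g, by rw [hg, Preadditive.comp_neg, Preadditive.neg_comp]⟩

lemma isRetract_obj₂_obj₃_of_mor₁_eq_zero (hT : T ∈ distTriang C)
    (h : T.mor₁ = 0) : IsRetract T.obj₂ T.obj₃ := by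
  obtain ⟨r, hr⟩ := Triangle.yoneda_exact₂ _ hT (𝟙 T.obj₂) (by rw [h, zero_comp])
  exact ⟨T.mor₂, r, hr.symm⟩

lemma isRetract_obj₂_obj₁_of_mor₂_eq_zero (hT : T ∈ distTriang C)
    (h : T.mor₂ = 0) : IsRetract T.obj₂ T.obj₁ := by
  obtain ⟨r, hr⟩ := Triangle.coyoneda_exact₂ _ hT (𝟙 T.obj₂) (by rw [h, comp_zero])
  exact ⟨r, T.mor₁, hr.symm⟩

variable (L : C)

lemma exists_lift_mor₁ (hT : T ∈ distTriang C) (hL : ∀ z : L ⟶ T.obj₃, z = 0)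
    (y : L ⟶ T.obj₂) : ∃ x, y = x ≫ T.mor₁ :=
  Triangle.coyoneda_exact₂ _ hT y (hL _)

lemma eq_zero_of_comp_shift_mor₁_eq_zero (hT : T ∈ distTriang C) (hL : ∀ z : L ⟶ T.obj₃, z = 0)
    (x : L ⟶ T.obj₁⟦(1 : ℤ)⟧) (hx : x ≫ T.mor₁⟦(1 : ℤ)⟧' = 0) : x = 0 := by
  obtain ⟨z, rfl⟩ := Triangle.coyoneda_exact₁ _ hT x hx
  rw [hL z, zero_comp]

lemma hom_obj₃_eq_zero (hT : T ∈ distTriang C) (h₁ : ∀ y : L ⟶ T.obj₂, ∃ x, y = x ≫ T.mor₁)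
    (h₂ : ∀ x : L ⟶ T.obj₁⟦(1 : ℤ)⟧, x ≫ T.mor₁⟦(1 : ℤ)⟧' = 0 → x = 0)
    (z : L ⟶ T.obj₃) : z = 0 := by
  have hz : z ≫ T.mor₃ = 0 := h₂ _ (by simp [comp_distTriang_mor_zero₃₁ _ hT])
  obtain ⟨y, rfl⟩ := Triangle.coyoneda_exact₃ _ hT z hz
  obtain ⟨x, rfl⟩ := h₁ y
  simp [comp_distTriang_mor_zero₁₂ _ hT]

/- The two halves of the four lemma for the long exact sequences of `Hom(L, -)` along `φ`. -/
lemma exists_lift_hom₂ (hT : T ∈ distTriang C) (hT' : T' ∈ distTriang C) (φ : T ⟶ T')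
    (h₁ : ∀ y : L ⟶ T'.obj₁, ∃ x, y = x ≫ φ.hom₁)
    (h₃ : ∀ y : L ⟶ T'.obj₃, ∃ x, y = x ≫ φ.hom₃)
    (h₁' : ∀ x : L ⟶ T.obj₁⟦(1 : ℤ)⟧, x ≫ φ.hom₁⟦(1 : ℤ)⟧' = 0 → x = 0)
    (y : L ⟶ T'.obj₂) : ∃ x, y = x ≫ φ.hom₂ := by
  obtain ⟨κ, hκ⟩ := h₃ (y ≫ T'.mor₂)
  have hκ₀ : κ ≫ T.mor₃ = 0 := h₁' _ (by
    rw [Category.assoc, φ.comm₃, ← Category.assoc, ← hκ, Category.assoc,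
      comp_distTriang_mor_zero₂₃ _ hT', comp_zero])
  obtain ⟨μ, rfl⟩ := Triangle.coyoneda_exact₃ _ hT κ hκ₀
  obtain ⟨ν, hν⟩ := Triangle.coyoneda_exact₂ _ hT' (y - μ ≫ φ.hom₂) (by
    rw [Preadditive.sub_comp, hκ, Category.assoc, Category.assoc, φ.comm₂, sub_self])
  obtain ⟨ν', rfl⟩ := h₁ ν
  refine ⟨μ + ν' ≫ T.mor₁, ?_⟩
  rw [Preadditive.add_comp, Category.assoc, φ.comm₁, ← Category.assoc, ← hν]
  abel

lemma eq_zero_of_comp_shift_hom₂_eq_zero (hT : T ∈ distTriang C) (hT' : T' ∈ distTriang C)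
    (φ : T ⟶ T') (h₃ : ∀ y : L ⟶ T'.obj₃, ∃ x, y = x ≫ φ.hom₃)
    (h₁' : ∀ x : L ⟶ T.obj₁⟦(1 : ℤ)⟧, x ≫ φ.hom₁⟦(1 : ℤ)⟧' = 0 → x = 0)
    (h₃' : ∀ x : L ⟶ T.obj₃⟦(1 : ℤ)⟧, x ≫ φ.hom₃⟦(1 : ℤ)⟧' = 0 → x = 0)
    (x : L ⟶ T.obj₂⟦(1 : ℤ)⟧) (hx : x ≫ φ.hom₂⟦(1 : ℤ)⟧' = 0) : x = 0 := by
  have hx₀ : x ≫ T.mor₂⟦(1 : ℤ)⟧' = 0 := h₃' _ (by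
    rw [Category.assoc, ← Functor.map_comp, φ.comm₂, Functor.map_comp, ← Category.assoc, hx,
      zero_comp])
  obtain ⟨y, rfl⟩ := coyoneda_exact₂_shift hT x hx₀
  obtain ⟨ε, hε⟩ := Triangle.coyoneda_exact₁ _ hT' (y ≫ φ.hom₁⟦(1 : ℤ)⟧') (by
    rw [Category.assoc, ← Functor.map_comp, ← φ.comm₁, Functor.map_comp, ← Category.assoc, hx])
  obtain ⟨κ, rfl⟩ := h₃ ε
  have hy : y = κ ≫ T.mor₃ := by
    rw [← sub_eq_zero]
    refine h₁' _ ?_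
    rw [Preadditive.sub_comp, hε, Category.assoc, Category.assoc, φ.comm₃, sub_self]
  rw [hy, Category.assoc, comp_distTriang_mor_zero₃₁ _ hT, comp_zero]

end CategoryTheory.Pretriangulated

namespace WeightStructure

variable (w : WeightStructure C)

lemma mem_LE_of_iso {X Y : C} (e : X ≅ Y) (hY : Y ∈ w.LE) : X ∈ w.LE :=
  w.retract_mem_LE ⟨e.hom, e.inv, e.hom_inv_id⟩ hY

lemma mem_GE_of_iso {X Y : C} (e : X ≅ Y) (hY : Y ∈ w.GE) : X ∈ w.GE :=
  w.retract_mem_GE ⟨e.hom, e.inv, e.hom_inv_id⟩ hY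

lemma shift_mem_LE {X : C} (hX : X ∈ w.LE) {k : ℤ} (hk : k ≤ 0) : X⟦k⟧ ∈ w.LE := by
  induction k, hk using Int.leInductionDown with
  | base => exact w.mem_LE_of_iso ((shiftFunctorZero C ℤ).app X) hX
  | pred k _ ih =>
    exact w.mem_LE_of_iso ((shiftFunctorAdd' C k (-1) (k - 1) (by omega)).app X)
      (w.shift_LE _ ih)

lemma le_mono {X : C} {m m' : ℤ} (hX : X ∈ w.le m) (h : m ≤ m') : X ∈ w.le m' :=
  w.mem_LE_of_iso ((shiftFunctorAdd' C (-m) (m - m') (-m') (by ring)).app X)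
    (w.shift_mem_LE hX (by omega))

lemma shift_mem_ge {X : C} {n : ℤ} (hX : X ∈ w.ge n) (k : ℤ) : X⟦k⟧ ∈ w.ge (n + k) :=
  w.mem_GE_of_iso ((shiftFunctorAdd' C k (-(n + k)) (-n) (by ring)).app X).symm hX

lemma hom_eq_zero {X Y : C} {m n : ℤ} (hX : X ∈ w.le m) (hY : Y ∈ w.ge n) (hmn : m < n)
    (f : X ⟶ Y) : f = 0 := by
  let e := (shiftFunctorAdd' C (-n) 1 (-(n - 1)) (by ring)).app Y
  have h := w.orthogonal (w.le_mono hX (show m ≤ n - 1 by omega)) hY (f⟦-(n - 1)⟧' ≫ e.hom)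
  rwa [Preadditive.IsIso.comp_right_eq_zero, Functor.map_eq_zero_iff] at h

lemma mem_ge_of_forall_hom_eq_zero (n : ℤ) (X : C)
    (hX : ∀ L ∈ w.le (n - 1), ∀ f : L ⟶ X, f = 0) : X ∈ w.ge n := by
  obtain ⟨L, G, f, g, h, hT, hL, hG⟩ := w.exists_decomp (X⟦-(n - 1)⟧)
  have hf : f = 0 := by
    let e := (shiftFunctorCompIsoId C (-(n - 1)) (n - 1) (by ring)).app X
    have hL' : L⟦n - 1⟧ ∈ w.le (n - 1) :=
      w.mem_LE_of_iso ((shiftFunctorCompIsoId C (n - 1) (-(n - 1)) (by ring)).app L) hL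
    have h₀ := hX _ hL' (f⟦n - 1⟧' ≫ e.hom)
    rwa [Preadditive.IsIso.comp_right_eq_zero, Functor.map_eq_zero_iff] at h₀
  have hX' := w.retract_mem_GE ((isRetract_obj₂_obj₃_of_mor₁_eq_zero hT hf).map _) hG
  exact w.mem_GE_of_iso ((shiftFunctorAdd' C (-(n - 1)) (-1) (-n) (by ring)).app X) hX'

lemma mem_le_of_forall_hom_eq_zero (m : ℤ) (X : C)
    (hX : ∀ G ∈ w.ge (m + 1), ∀ f : X ⟶ G, f = 0) : X ∈ w.le m := by
  obtain ⟨L, G, f, g, h, hT, hL, hG⟩ := w.exists_decomp (X⟦-m⟧)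
  have hg : g = 0 := by
    let e := (shiftFunctorCompIsoId C (-m) m (by ring)).app X
    have hG' : G⟦m⟧ ∈ w.ge (m + 1) :=
      w.mem_GE_of_iso ((shiftFunctorAdd' C m (-(m + 1)) (-1) (by ring)).app G).symm hG
    have h₀ := hX _ hG' (e.inv ≫ g⟦m⟧')
    rwa [Preadditive.IsIso.comp_left_eq_zero, Functor.map_eq_zero_iff] at h₀
  exact w.retract_mem_LE (isRetract_obj₂_obj₁_of_mor₂_eq_zero hT hg) hL

lemma mem_le_of_distinguished {T : Triangle C} (hT : T ∈ distTriang C) {m : ℤ}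
    (h₁ : T.obj₁ ∈ w.le m) (h₃ : T.obj₃ ∈ w.le m) : T.obj₂ ∈ w.le m := by
  refine w.mem_le_of_forall_hom_eq_zero m _ fun G hG f => ?_
  obtain ⟨g, rfl⟩ := Triangle.yoneda_exact₂ _ hT f (w.hom_eq_zero h₁ hG (by omega) _)
  rw [w.hom_eq_zero h₃ hG (by omega) g, comp_zero]

end WeightStructure

theorem stmt_5 (w : WeightStructure C) (i : ℤ)
    (A C' B : C) (a : A ⟶ C') (b : C' ⟶ B) (c : B ⟶ A⟦(1 : ℤ)⟧)
    (hT : Triangle.mk a b c ∈ distTriang C)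
    (LA GA : C) (fA : LA ⟶ A) (gA : A ⟶ GA) (hA : GA ⟶ LA⟦(1 : ℤ)⟧)
    (hTA : Triangle.mk fA gA hA ∈ distTriang C)
    (hLA : LA ∈ w.le (i - 1)) (hGA : GA ∈ w.ge i)
    (LB GB : C) (fB : LB ⟶ B) (gB : B ⟶ GB) (hB : GB ⟶ LB⟦(1 : ℤ)⟧)
    (hTB : Triangle.mk fB gB hB ∈ distTriang C)
    (hLB : LB ∈ w.le (i - 1)) (hGB : GB ∈ w.ge i) :
    ∃ (LC GC : C) (fC : LC ⟶ C') (gC : C' ⟶ GC) (hC : GC ⟶ LC⟦(1 : ℤ)⟧),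
      (Triangle.mk fC gC hC ∈ distTriang C) ∧ LC ∈ w.le (i - 1) ∧ GC ∈ w.ge i ∧
      ∃ (u : LA ⟶ LC) (v : LC ⟶ LB) (t : LB ⟶ LA⟦(1 : ℤ)⟧),
        Triangle.mk u v t ∈ distTriang C := by
  obtain ⟨g, hg⟩ := coyoneda_exact₂_shift hTA (fB ≫ c)
    (w.hom_eq_zero hLB (w.shift_mem_ge hGA 1) (by omega) _)
  obtain ⟨LC, u, v, hTL⟩ := distinguished_cocone_triangle₂ g
  obtain ⟨s, hs₁, hs₂⟩ := complete_distinguished_triangle_morphism₂ _ _ hTL hT fA fB hg.symm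
  let φ : Triangle.mk u v g ⟶ Triangle.mk a b c := Triangle.homMk _ _ fA s fB hs₁ hs₂ hg.symm
  obtain ⟨GC, σ, h, hTC⟩ := distinguished_cocone_triangle s
  refine ⟨LC, GC, s, σ, h, hTC, w.mem_le_of_distinguished hTL hLA hLB, ?_, u, v, g, hTL⟩
  refine w.mem_ge_of_forall_hom_eq_zero i GC fun L hL => ?_
  have hGA₀ : ∀ z : L ⟶ GA, z = 0 := w.hom_eq_zero hL hGA (by omega)
  have hGB₀ : ∀ z : L ⟶ GB, z = 0 := w.hom_eq_zero hL hGB (by omega)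
  have hfA := exists_lift_mor₁ L hTA hGA₀
  have hfB := exists_lift_mor₁ L hTB hGB₀
  have hfA' := eq_zero_of_comp_shift_mor₁_eq_zero L hTA hGA₀
  exact hom_obj₃_eq_zero L hTC (exists_lift_hom₂ L hTL hT φ hfA hfB hfA')
    (eq_zero_of_comp_shift_hom₂_eq_zero L hTL hT φ hfB hfA'
      (eq_zero_of_comp_shift_mor₁_eq_zero L hTB hGB₀))
end

section
/- Let C be a triangulated category with a weight structure w, H : C → A a homological functor into an abelian category A, M an object of C, and m ∈ ℤ. Then the subobject (W_m H)(M) := Im( H(w_{≤m}M) → H(M) ) of H(M) does not depend on the choice of the m-weight decomposition w_{≤m}M → M → w_{≥m+1}M. -/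
open CategoryTheory CategoryTheory.Limits CategoryTheory.Pretriangulated

universe v u v₂ u₂

variable (C : Type u) [Category.{v} C] [HasZeroObject C] [Preadditive C] [HasShift C ℤ]
  [∀ n : ℤ, (shiftFunctor C n).Additive] [Pretriangulated C]

variable {C}

/-- A functor from a triangulated category to an abelian category is homological if it converts
distinguished triangles into exact sequences. -/
def IsHomologicalFunctor {A : Type u₂} [Category.{v₂} A] [Abelian A] (F : C ⥤ A) : Prop :=
  ∀ (T : Triangle C), (T ∈ distTriang C) →
    ∃ (hzero : F.map T.mor₁ ≫ F.map T.mor₂ = 0),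
      (ShortComplex.mk (F.map T.mor₁) (F.map T.mor₂) hzero).Exact

/-! Let `B --f--> M --g--> A → B⟦1⟧` be an `m`-weight decomposition and `u : X ⟶ M` any morphism
with `X` of weight `≤ m`. By orthogonality `u ≫ g = 0`, so `u` lifts through `f`, and the image of
`H u` lies in that of `H f`. Applying this to each decomposition with `u` the other one's
`w_{≤m}M → M` gives the two inclusions. -/

namespace WeightStructure

variable (w : WeightStructure C)

lemma eq_zero_of_mem_le_of_mem_ge {m : ℤ} {X Y : C} (hX : X ∈ w.le m) (hY : Y ∈ w.ge (m + 1))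
    (φ : X ⟶ Y) : φ = 0 := by
  let e := (shiftFunctorAdd' C (-(m + 1)) 1 (-m) (by ring)).app Y
  have hφ := w.orthogonal hX hY ((shiftFunctor C (-m)).map φ ≫ e.hom)
  apply (shiftFunctor C (-m)).map_injective
  rw [← cancel_mono e.hom, hφ, Functor.map_zero, zero_comp]

lemma exists_lift_of_mem_le {m : ℤ} {M X B A : C} {f : B ⟶ M} {g : M ⟶ A} {h : A ⟶ B⟦(1 : ℤ)⟧}
    (hT : Triangle.mk f g h ∈ distTriang C) (hA : A ∈ w.ge (m + 1)) (hX : X ∈ w.le m)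
    (u : X ⟶ M) : ∃ φ : X ⟶ B, φ ≫ f = u :=
  Triangle.coyoneda_exact₂ _ hT u (w.eq_zero_of_mem_le_of_mem_ge hX hA (u ≫ g)) |>.imp
    fun _ hφ => hφ.symm

lemma imageSubobject_map_le {D : Type*} [Category D] [HasImages D] (H : C ⥤ D) {m : ℤ}
    {M X B A : C} {f : B ⟶ M} {g : M ⟶ A} {h : A ⟶ B⟦(1 : ℤ)⟧}
    (hT : Triangle.mk f g h ∈ distTriang C) (hA : A ∈ w.ge (m + 1)) (hX : X ∈ w.le m)
    (u : X ⟶ M) : imageSubobject (H.map u) ≤ imageSubobject (H.map f) := by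
  obtain ⟨φ, rfl⟩ := w.exists_lift_of_mem_le hT hA hX u
  rw [H.map_comp]
  exact imageSubobject_comp_le _ _

end WeightStructure

theorem stmt_12_general (w : WeightStructure C) {A : Type u₂} [Category.{v₂} A] [Abelian A]
    (H : C ⥤ A) (M : C) (m : ℤ)
    (B₁ A₁ : C) (f₁ : B₁ ⟶ M) (g₁ : M ⟶ A₁) (h₁ : A₁ ⟶ B₁⟦(1 : ℤ)⟧)
    (hT₁ : Triangle.mk f₁ g₁ h₁ ∈ distTriang C)
    (hB₁ : B₁ ∈ w.le m) (hA₁ : A₁ ∈ w.ge (m + 1))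
    (B₂ A₂ : C) (f₂ : B₂ ⟶ M) (g₂ : M ⟶ A₂) (h₂ : A₂ ⟶ B₂⟦(1 : ℤ)⟧)
    (hT₂ : Triangle.mk f₂ g₂ h₂ ∈ distTriang C)
    (hB₂ : B₂ ∈ w.le m) (hA₂ : A₂ ∈ w.ge (m + 1)) :
    imageSubobject (H.map f₁) = imageSubobject (H.map f₂) :=
  le_antisymm (w.imageSubobject_map_le H hT₂ hA₂ hB₁ f₁) (w.imageSubobject_map_le H hT₁ hA₁ hB₂ f₂)

theorem stmt_12 (w : WeightStructure C) {A : Type u₂} [Category.{v₂} A] [Abelian A]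
    (H : C ⥤ A) [H.Additive] (hH : IsHomologicalFunctor H) (M : C) (m : ℤ)
    (B₁ A₁ : C) (f₁ : B₁ ⟶ M) (g₁ : M ⟶ A₁) (h₁ : A₁ ⟶ B₁⟦(1 : ℤ)⟧)
    (hT₁ : Triangle.mk f₁ g₁ h₁ ∈ distTriang C)
    (hB₁ : B₁ ∈ w.le m) (hA₁ : A₁ ∈ w.ge (m + 1))
    (B₂ A₂ : C) (f₂ : B₂ ⟶ M) (g₂ : M ⟶ A₂) (h₂ : A₂ ⟶ B₂⟦(1 : ℤ)⟧)
    (hT₂ : Triangle.mk f₂ g₂ h₂ ∈ distTriang C)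
    (hB₂ : B₂ ∈ w.le m) (hA₂ : A₂ ∈ w.ge (m + 1)) :
    imageSubobject (H.map f₁) = imageSubobject (H.map f₂) :=
  stmt_12_general w H M m B₁ A₁ f₁ g₁ h₁ hT₁ hB₁ hA₁ B₂ A₂ f₂ g₂ h₂ hT₂ hB₂ hA₂
end
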